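/- If ω₀ is a Hermitian metric on a compact complex manifold M of dimension n satisfying both ∂∂̄ω₀ = 0 and ∂∂̄(ω₀²) = 0, then ∂∂̄(ω₀^k) = 0 for all k ≥ 1. Moreover, these two conditions are preserved along the Chern–Ricci flow. -/

import Mathlib

/-!
Writing `∂∂̄(α∧β) = ∂∂̄α∧β + α∧∂∂̄β + c(α, β)` with the cross term `c(α, β) = ∂α∧∂̄β + ∂̄α∧∂β`,
the identity `∂∂̄(ω²) = 2ω∧∂∂̄ω + c(ω, ω)` shows that the two hypotheses amount to
`∂∂̄ω = 0` and `c(ω, ω) = 0`. Since `c(ω, ·)` is a derivation, `c(ω, ω^k) = 0` and then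
`∂∂̄(ω^k) = 0` follow by induction on `k`. Along the Chern–Ricci flow `∂ₜω = -Ric(ω)`, the
closedness of `Ric(ω)` makes both `∂∂̄ω` and `c(ω, ω)` constant in time.
-/

open Set

section Leibniz

variable {A : Type*} [CommRing A] {ddbar : A → A} {cross : A → A → A}

theorem ddbar_sq (hLeib : ∀ α β : A, ddbar (α * β) = ddbar α * β + α * ddbar β + cross α β)
    (ω : A) : ddbar (ω ^ 2) = 2 * ω * ddbar ω + cross ω ω := by
  rw [sq, hLeib]
  ring

theorem cross_self_eq_zero
    (hLeib : ∀ α β : A, ddbar (α * β) = ddbar α * β + α * ddbar β + cross α β)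
    {ω : A} (h1 : ddbar ω = 0) (h2 : ddbar (ω ^ 2) = 0) : cross ω ω = 0 := by
  simpa [h1] using (ddbar_sq hLeib ω).symm.trans h2

theorem cross_pow_eq_zero (hder : ∀ α β γ : A, cross α (β * γ) = cross α β * γ + β * cross α γ)
    {ω : A} (hc : cross ω ω = 0) {k : ℕ} (hk : 1 ≤ k) : cross ω (ω ^ k) = 0 := by
  induction k, hk using Nat.le_induction with
  | base => rwa [pow_one]
  | succ k _ ih => rw [pow_succ', hder, hc, ih, zero_mul, mul_zero, add_zero]

theorem ddbar_pow_eq_zero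
    (hLeib : ∀ α β : A, ddbar (α * β) = ddbar α * β + α * ddbar β + cross α β)
    (hder : ∀ α β γ : A, cross α (β * γ) = cross α β * γ + β * cross α γ)
    {ω : A} (h1 : ddbar ω = 0) (hc : cross ω ω = 0) {k : ℕ} (hk : 1 ≤ k) :
    ddbar (ω ^ k) = 0 := by
  induction k, hk using Nat.le_induction with
  | base => rwa [pow_one]
  | succ k hk ih =>
    rw [pow_succ', hLeib, h1, ih, cross_pow_eq_zero hder hc hk, zero_mul, mul_zero, add_zero,
      add_zero]

end Leibniz

theorem eq_of_hasDerivAt_eq_zero_on_Ico {E : Type*} [NormedAddCommGroup E] [NormedSpace ℝ E]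
    {f : ℝ → E} {a b : ℝ} (hf : ∀ t ∈ Ico a b, HasDerivAt f 0 t) :
    ∀ t ∈ Ico a b, f t = f a := by
  intro t ht
  have hsub : Icc a t ⊆ Ico a b := Icc_subset_Ico_right ht.2
  exact constant_of_has_deriv_right_zero
    (fun x hx => (hf x (hsub hx)).continuousAt.continuousWithinAt)
    (fun x hx => (hf x (hsub (Ico_subset_Icc_self hx))).hasDerivWithinAt) t ⟨ht.1, le_rfl⟩

section ChernRicciFlow

variable {A : Type*} [NormedAddCommGroup A] [NormedSpace ℝ A]

def IsChernRicciFlow (Ric : A → A) (T : ℝ) (ω : ℝ → A) : Prop :=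
  ∀ t ∈ Ico (0 : ℝ) T, HasDerivAt ω (-(Ric (ω t))) t

variable {Ric : A → A} {T : ℝ} {ω : ℝ → A}

theorem IsChernRicciFlow.map_eq_map_zero (hω : IsChernRicciFlow Ric T ω) (L : A →L[ℝ] A)
    (hRic : ∀ g, L (Ric g) = 0) : ∀ t ∈ Ico (0 : ℝ) T, L (ω t) = L (ω 0) := by
  refine eq_of_hasDerivAt_eq_zero_on_Ico fun t ht => ?_
  have hL := L.hasFDerivAt.comp_hasDerivAt t (hω t ht)
  rwa [map_neg, hRic, neg_zero] at hL

theorem IsChernRicciFlow.bilinear_self_eq_bilinear_zero (hω : IsChernRicciFlow Ric T ω)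
    (B : A →L[ℝ] A →L[ℝ] A) (hsymm : ∀ α β, B α β = B β α) (hRic : ∀ g α, B (Ric g) α = 0) :
    ∀ t ∈ Ico (0 : ℝ) T, B (ω t) (ω t) = B (ω 0) (ω 0) := by
  refine eq_of_hasDerivAt_eq_zero_on_Ico fun t ht => ?_
  have hB := B.hasDerivAt_of_bilinear (fun _ => hω t ht) (fun _ => hω t ht)
  simpa [hsymm (ω t), hRic] using hB

end ChernRicciFlow

theorem stmt13 {A : Type*} [NormedCommRing A] [NormedAlgebra ℝ A]
    (ddbar : A →L[ℝ] A)
    (cross : A →L[ℝ] A →L[ℝ] A)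
    (hLeib : ∀ α β : A, ddbar (α * β) = ddbar α * β + α * ddbar β + cross α β)
    (hsymm : ∀ α β : A, cross α β = cross β α)
    (hder : ∀ α β γ : A, cross α (β * γ) = cross α β * γ + β * cross α γ)
    (Ric : A → A)
    (hRicClosed : ∀ g : A, ddbar (Ric g) = 0 ∧ ∀ α : A, cross (Ric g) α = 0)
    (ω₀ : A)
    (h1 : ddbar ω₀ = 0) (h2 : ddbar (ω₀ ^ 2) = 0) :
    -- ∂∂̄(ω₀^k) = 0 for all k ≥ 1
    (∀ k : ℕ, 1 ≤ k → ddbar (ω₀ ^ k) = 0) ∧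
    -- both conditions are preserved along the Chern–Ricci flow
    (∀ (T : ℝ) (ω : ℝ → A), ω 0 = ω₀ →
      (∀ t ∈ Set.Ico (0:ℝ) T, HasDerivAt ω (-(Ric (ω t))) t) →
      ∀ t ∈ Set.Ico (0:ℝ) T, ddbar (ω t) = 0 ∧ ddbar ((ω t) ^ 2) = 0) := by
  have hc₀ : cross ω₀ ω₀ = 0 := cross_self_eq_zero hLeib h1 h2
  refine ⟨fun k hk => ddbar_pow_eq_zero hLeib hder h1 hc₀ hk, fun T ω h0 hflow t ht => ?_⟩
  have hω : IsChernRicciFlow Ric T ω := hflow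
  have hd : ddbar (ω t) = 0 := by
    rw [hω.map_eq_map_zero ddbar (fun g => (hRicClosed g).1) t ht, h0, h1]
  have hc : cross (ω t) (ω t) = 0 := by
    rw [hω.bilinear_self_eq_bilinear_zero cross hsymm (fun g => (hRicClosed g).2) t ht, h0, hc₀]
  exact ⟨hd, ddbar_pow_eq_zero hLeib hder hd hc one_le_two⟩
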